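/- Let Y and Z be nonnegative integrable random variables on a probability space such that Y·Z is integrable and E[Y·Z] ≤ E[Y]·E[Z] (nonpositive correlation). Let h : [0,∞) → [0,∞) be concave and monotone increasing with Y·h(Z) integrable. Then E[Y·h(Z)] ≤ E[Y]·h(E[Z]). -/

import Mathlib

/-!
A concave `h` lies below its supporting line `h m + s (z - m)` at `m = E[Z]`, with slope `s ≥ 0`
because `h` is increasing. Multiplying by `Y ≥ 0` and integrating gives
`E[Y h(Z)] ≤ h(m) E[Y] + s (E[YZ] - m E[Y])`, and the bracket is nonpositive by the correlation
hypothesis. If `E[Z] = 0` there need not be a supporting line at the boundary point `0`, but then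
`Z = 0` almost surely and the horizontal line `h 0` serves.
-/

open MeasureTheory Set

namespace ConvexOn

variable {S : Set ℝ} {f : ℝ → ℝ} {x y : ℝ}

theorem add_rightDeriv_mul_sub_le (hf : ConvexOn ℝ S f) (hx : x ∈ interior S) (hy : y ∈ S) :
    f x + derivWithin f (Ioi x) x * (y - x) ≤ f y := by
  rcases lt_trichotomy y x with hyx | rfl | hxy
  · have hslope : slope f y x ≤ derivWithin f (Ioi x) x :=
      (hf.slope_le_leftDeriv_of_mem_interior hy hx hyx).trans
        (hf.leftDeriv_le_rightDeriv_of_mem_interior hx)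
    rw [slope_def_field, div_le_iff₀ (sub_pos.2 hyx)] at hslope
    linarith
  · simp
  · have hslope := hf.rightDeriv_le_slope_of_mem_interior hx hy hxy
    rw [slope_def_field, le_div_iff₀ (sub_pos.2 hxy)] at hslope
    linarith

end ConvexOn

theorem ConcaveOn.le_add_rightDeriv_mul_sub {S : Set ℝ} {f : ℝ → ℝ} {x y : ℝ}
    (hf : ConcaveOn ℝ S f) (hx : x ∈ interior S) (hy : y ∈ S) :
    f y ≤ f x + derivWithin f (Ioi x) x * (y - x) := by
  have := hf.neg.add_rightDeriv_mul_sub_le hx hy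
  simp only [derivWithin.neg, Pi.neg_apply] at this
  linarith

theorem integral_mul_le_of_ae_le_affine {Ω : Type*} [MeasurableSpace Ω] {P : Measure Ω}
    {Y Z g : Ω → ℝ} (hYpos : ∀ ω, 0 ≤ Y ω) (hYint : Integrable Y P)
    (hYZint : Integrable (fun ω => Y ω * Z ω) P) (hYgint : Integrable (fun ω => Y ω * g ω) P)
    (hcorr : ∫ ω, Y ω * Z ω ∂P ≤ (∫ ω, Y ω ∂P) * ∫ ω, Z ω ∂P) {c s : ℝ} (hs : 0 ≤ s)
    (hg : ∀ᵐ ω ∂P, g ω ≤ c + s * (Z ω - ∫ ω, Z ω ∂P)) :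
    ∫ ω, Y ω * g ω ∂P ≤ (∫ ω, Y ω ∂P) * c := by
  set m := ∫ ω, Z ω ∂P
  have haffine : (fun ω => Y ω * (c + s * (Z ω - m))) =
      fun ω => (c - s * m) * Y ω + s * (Y ω * Z ω) := by
    funext ω; ring
  have haffine_int : Integrable (fun ω => Y ω * (c + s * (Z ω - m))) P := by
    rw [haffine]
    exact (hYint.const_mul _).add (hYZint.const_mul _)
  calc ∫ ω, Y ω * g ω ∂P
      ≤ ∫ ω, Y ω * (c + s * (Z ω - m)) ∂P := by
        refine integral_mono_ae hYgint haffine_int ?_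
        filter_upwards [hg] with ω hω
        exact mul_le_mul_of_nonneg_left hω (hYpos ω)
    _ = (c - s * m) * ∫ ω, Y ω ∂P + s * ∫ ω, Y ω * Z ω ∂P := by
        rw [haffine, integral_add (hYint.const_mul _) (hYZint.const_mul _),
          integral_const_mul, integral_const_mul]
    _ ≤ (c - s * m) * ∫ ω, Y ω ∂P + s * ((∫ ω, Y ω ∂P) * m) := by
        gcongr
    _ = (∫ ω, Y ω ∂P) * c := by ring

theorem concave_nonpos_corr_bound {Ω : Type*} [MeasurableSpace Ω] (P : Measure Ω)
    (Y Z : Ω → ℝ)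
    (hYpos : ∀ ω, 0 ≤ Y ω) (hZpos : ∀ ω, 0 ≤ Z ω)
    (hYint : Integrable Y P) (hZint : Integrable Z P)
    (hYZint : Integrable (fun ω => Y ω * Z ω) P)
    (hcorr : ∫ ω, Y ω * Z ω ∂P ≤ (∫ ω, Y ω ∂P) * ∫ ω, Z ω ∂P)
    (h : ℝ → ℝ)
    (hconc : ConcaveOn ℝ (Ici 0) h) (hmono : MonotoneOn h (Ici 0))
    (hYhZint : Integrable (fun ω => Y ω * h (Z ω)) P) :
    ∫ ω, Y ω * h (Z ω) ∂P ≤ (∫ ω, Y ω ∂P) * h (∫ ω, Z ω ∂P) := by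
  set m := ∫ ω, Z ω ∂P with hm
  obtain ⟨s, hs, hline⟩ : ∃ s, 0 ≤ s ∧ ∀ᵐ ω ∂P, h (Z ω) ≤ h m + s * (Z ω - m) := by
    rcases (integral_nonneg hZpos : 0 ≤ m).eq_or_lt with hm0 | hm0
    · have hZ0 : Z =ᵐ[P] 0 := (integral_eq_zero_iff_of_nonneg hZpos hZint).1 hm0.symm
      refine ⟨0, le_rfl, ?_⟩
      filter_upwards [hZ0] with ω hω
      simp [hω, hm, ← hm0]
    · refine ⟨derivWithin h (Ioi m) m, (hmono.mono (Ioi_subset_Ici hm0.le)).derivWithin_nonneg,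
        Filter.Eventually.of_forall fun ω => ?_⟩
      exact hconc.le_add_rightDeriv_mul_sub (by rwa [interior_Ici]) (hZpos ω)
  exact integral_mul_le_of_ae_le_affine hYpos hYint hYZint hYhZint hcorr hs hline
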